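/- arXiv:1904.11046 — 5 statements merged into one kernel-verified Lean document; each statement's English description precedes it below -/
import Mathlib

section
/- Let n be an odd positive integer and let f : ZMod n → ℕ. If all sums of two cyclically consecutive entries of f are equal (that is, f(i) + f(i+1) = f(j) + f(j+1) for all i, j ∈ ZMod n, indices taken in ZMod n), then f is constant. (Equivalently: when n is odd, the only invalid codes of length n are the constant codes.) -/
/-- When `n` is odd, the only invalid codes of length `n` are the constant codes:
if all sums of two cyclically consecutive entries of `f : ZMod n → ℕ` are equal,
then `f` is constant. -/
theorem odd_invalid_is_constant (n : ℕ) (hn : 0 < n) (hodd : Odd n)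
    (f : ZMod n → ℕ)
    (h : ∀ i j : ZMod n, f i + f (i + 1) = f j + f (j + 1)) :
    ∀ i j : ZMod n, f i = f j := by
  haveI : NeZero n := ⟨hn.ne'⟩
  have key : ∀ i : ZMod n, f (i + 2) = f i := by
    intro i
    have := h i (i + 1)
    have : f i + f (i + 1) = f (i + 1) + f (i + 1 + 1) := this
    rw [add_assoc, one_add_one_eq_two] at this
    omega
  have step : ∀ (k : ℕ) (i : ZMod n), f (i + 2 * (k : ZMod n)) = f i := by
    intro k
    induction k with
    | zero => simp
    | succ m ih =>
      intro i
      have : i + 2 * ((m + 1 : ℕ) : ZMod n) = (i + 2) + 2 * (m : ZMod n) := by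
        push_cast; ring
      rw [this, ih, key]
  intro i j
  have hu : IsUnit (2 : ZMod n) := by
    rw [show ((2 : ZMod n)) = ((2 : ℕ) : ZMod n) by norm_num,
      ZMod.isUnit_iff_coprime]
    exact Nat.coprime_two_left.mpr hodd
  set c : ZMod n := (j - i) * (2 : ZMod n)⁻¹ with hc
  have h2 : 2 * c = j - i := by
    rw [hc, ← mul_assoc, mul_comm (2 : ZMod n), mul_assoc,
      ZMod.mul_inv_of_unit _ hu, mul_one]
  have := step c.val i
  rw [ZMod.natCast_val, ZMod.cast_id, h2] at this
  simpa using this.symm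
end

section
/- Fix positive integers n and k. If there exists a riwi-map χ : F'_{n,k} → F'_{n,k}, then there exists a bijection between F'_{n,k,0} (the aperiodic (n,k)-codes with weighted sum 0) and N'_{n,k} (the set of rotation-classes of aperiodic (n,k)-codes). -/
open Finset

/-- An `(n,k)`-code: `f : ZMod n → ℕ` with total sum `k`. -/
def IsCode (n : ℕ) [NeZero n] (k : ℕ) (f : ZMod n → ℕ) : Prop :=
  ∑ i : ZMod n, f i = k

/-- The weighted sum `W(f) = ∑ i · f(i)` in `ZMod n`. -/
def wsum (n : ℕ) [NeZero n] (f : ZMod n → ℕ) : ZMod n :=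
  ∑ i : ZMod n, i * (f i : ZMod n)

/-- The rotation `c`, defined by `(c f) i = f (i+1)`. -/
def rot (n : ℕ) [NeZero n] (f : ZMod n → ℕ) : ZMod n → ℕ := fun i => f (i + 1)

/-- A code is aperiodic (has period `n`) if `c^j f = f` implies `n ∣ j`. -/
def Aperiodic (n : ℕ) [NeZero n] (f : ZMod n → ℕ) : Prop :=
  ∀ j : ℕ, (rot n)^[j] f = f → n ∣ j

/-- The rotation class (orbit under `c`) of a code. -/
def rotOrbit (n : ℕ) [NeZero n] (f : ZMod n → ℕ) : Set (ZMod n → ℕ) :=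
  {g | ∃ j : ℕ, (rot n)^[j] f = g}


/-- The set `F'_{n,k}` of aperiodic `(n,k)`-codes. -/
def aperiodicCodes (n k : ℕ) [NeZero n] : Set (ZMod n → ℕ) :=
  {f | IsCode n k f ∧ Aperiodic n f}

/-- `χ` is a riwi-map on `F'_{n,k}`: a bijection of `F'_{n,k}` which commutes with the
rotation `c` and increases the weighted sum by one. -/
def IsRiwi (n k : ℕ) [NeZero n] (χ : (ZMod n → ℕ) → (ZMod n → ℕ)) : Prop :=
  Set.BijOn χ (aperiodicCodes n k) (aperiodicCodes n k) ∧
  (∀ f ∈ aperiodicCodes n k, χ (rot n f) = rot n (χ f)) ∧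
  (∀ f ∈ aperiodicCodes n k, wsum n (χ f) = wsum n f + 1)

/-- The set `N'_{n,k}` of rotation-classes of aperiodic `(n,k)`-codes. -/
def aperiodicNecklaces (n k : ℕ) [NeZero n] : Set (Set (ZMod n → ℕ)) :=
  {S | ∃ f : ZMod n → ℕ, (IsCode n k f ∧ Aperiodic n f) ∧ S = rotOrbit n f}

/-!
Since `χ` maps the codes of weight `t` injectively into those of weight `t + 1`, going once
around `ZMod n` shows that all `n` weight classes of `F'_{n,k}` have the same size, so
`|F'_{n,k}| = n · |F'_{n,k,0}|`. On the other hand the rotation class of an aperiodic code has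
exactly `n` elements, so `|F'_{n,k}| = n · |N'_{n,k}|`.
-/
theorem ZMod.eq_of_forall_le_add_one {n : ℕ} [NeZero n] {α : Type*} [PartialOrder α]
    {c : ZMod n → α} (h : ∀ t, c t ≤ c (t + 1)) (s t : ZMod n) : c s = c t := by
  have le_add_natCast (t : ZMod n) (m : ℕ) : c t ≤ c (t + m) := by
    induction m with
    | zero => simp
    | succ m ih => simpa only [Nat.cast_succ, add_assoc] using ih.trans (h _)
  have le (s t : ZMod n) : c s ≤ c t := by
    simpa only [ZMod.natCast_zmod_val, add_sub_cancel] using le_add_natCast s (t - s).val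
  exact le_antisymm (le s t) (le t s)

namespace Finset

variable {α β : Type*}

theorem card_eq_mul_card_filter_of_injOn_add_one {n : ℕ} [NeZero n] (s : Finset α)
    (w : α → ZMod n) {χ : α → α} (hmaps : Set.MapsTo χ s s) (hinj : Set.InjOn χ s)
    (hw : ∀ a ∈ s, w (χ a) = w a + 1) : #s = n * #{a ∈ s | w a = 0} := by
  have hle (t : ZMod n) : #{a ∈ s | w a = t} ≤ #{a ∈ s | w a = t + 1} := by
    refine card_le_card_of_injOn χ (fun a ha => ?_) (hinj.mono fun a ha => (mem_filter.1 ha).1)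
    obtain ⟨has, rfl⟩ := mem_filter.1 ha
    exact mem_filter.2 ⟨hmaps has, hw a has⟩
  calc #s = ∑ t : ZMod n, #{a ∈ s | w a = t} :=
        card_eq_sum_card_fiberwise fun _ _ => mem_univ _
    _ = ∑ _t : ZMod n, #{a ∈ s | w a = 0} :=
        sum_congr rfl fun t _ => ZMod.eq_of_forall_le_add_one hle t 0
    _ = n * #{a ∈ s | w a = 0} := by rw [sum_const, card_univ, ZMod.card, smul_eq_mul]

theorem card_eq_mul_card_image_of_forall_card_fiber [DecidableEq β] (f : α → β) (s : Finset α)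
    (m : ℕ) (hm : ∀ b ∈ s.image f, #{a ∈ s | f a = b} = m) : #s = m * #(s.image f) :=
  le_antisymm (card_le_mul_card_image s m fun b hb => (hm b hb).le)
    (mul_card_image_le_card s m fun b hb => (hm b hb).ge)

end Finset

section Codes

variable {n : ℕ} [NeZero n]

theorem rot_iterate_eq (f : ZMod n → ℕ) (j : ℕ) : (rot n)^[j] f = fun i => f (i + j) := by
  induction j generalizing f with
  | zero => simp
  | succ j ih =>
    rw [Function.iterate_succ_apply, ih]
    funext i
    simp only [rot, Nat.cast_succ, add_assoc]

theorem rotOrbit_eq_range (f : ZMod n → ℕ) :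
    rotOrbit n f = Set.range fun j : ZMod n => fun i => f (i + j) := by
  ext g
  simp only [rotOrbit, rot_iterate_eq, Set.mem_ofPred_eq, Set.mem_range]
  constructor
  · rintro ⟨j, rfl⟩
    exact ⟨j, rfl⟩
  · rintro ⟨j, rfl⟩
    exact ⟨j.val, by rw [ZMod.natCast_zmod_val]⟩

theorem aperiodic_iff_forall_shift_eq (f : ZMod n → ℕ) :
    Aperiodic n f ↔ ∀ j : ZMod n, (fun i => f (i + j)) = f → j = 0 := by
  simp only [Aperiodic, rot_iterate_eq]
  constructor
  · intro hf j hj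
    rw [← ZMod.natCast_zmod_val j] at hj ⊢
    exact (ZMod.natCast_eq_zero_iff _ _).2 (hf _ hj)
  · intro hf j hj
    exact (ZMod.natCast_eq_zero_iff _ _).1 (hf _ hj)

theorem Aperiodic.shift {f : ZMod n → ℕ} (hf : Aperiodic n f) (a : ZMod n) :
    Aperiodic n fun i => f (i + a) := by
  rw [aperiodic_iff_forall_shift_eq] at hf ⊢
  intro j hj
  refine hf j (funext fun i => ?_)
  simpa only [sub_add_cancel, add_right_comm] using congrFun hj (i - a)

theorem IsCode.shift {k : ℕ} {f : ZMod n → ℕ} (hf : IsCode n k f) (a : ZMod n) :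
    IsCode n k fun i => f (i + a) :=
  (Equiv.sum_comp (Equiv.addRight a) f).trans hf

theorem Aperiodic.injective_shift {f : ZMod n → ℕ} (hf : Aperiodic n f) :
    Function.Injective fun j : ZMod n => fun i => f (i + j) := by
  intro a b hab
  rw [← sub_eq_zero]
  refine (aperiodic_iff_forall_shift_eq f).1 hf _ (funext fun i => ?_)
  convert congrFun hab (i - b) using 2 <;> abel

theorem Aperiodic.ncard_rotOrbit {f : ZMod n → ℕ} (hf : Aperiodic n f) :
    (rotOrbit n f).ncard = n := by
  rw [rotOrbit_eq_range, Set.ncard_range_of_injective hf.injective_shift, Nat.card_zmod]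

theorem rotOrbit_eq_rotOrbit_iff (f g : ZMod n → ℕ) :
    rotOrbit n g = rotOrbit n f ↔ g ∈ rotOrbit n f := by
  constructor
  · intro h
    exact h ▸ ⟨0, rfl⟩
  · rw [rotOrbit_eq_range]
    rintro ⟨a, rfl⟩
    rw [rotOrbit_eq_range]
    simpa only [Function.comp_def, Equiv.coe_addRight, add_assoc] using
      (Equiv.addRight a).surjective.range_comp fun j i => f (i + j)

theorem rotOrbit_subset_aperiodicCodes {k : ℕ} {f : ZMod n → ℕ}
    (hf : f ∈ aperiodicCodes n k) : rotOrbit n f ⊆ aperiodicCodes n k := by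
  rw [rotOrbit_eq_range]
  rintro _ ⟨a, rfl⟩
  exact ⟨hf.1.shift a, hf.2.shift a⟩

theorem aperiodicCodes_finite (k : ℕ) : (aperiodicCodes n k).Finite := by
  refine (Set.Finite.pi' fun _ => Set.finite_Iic k).subset fun f hf i => ?_
  exact hf.1 ▸ Finset.single_le_sum (fun j _ => Nat.zero_le (f j)) (Finset.mem_univ i)

open scoped Classical in
theorem card_aperiodicCodes_eq_mul_card_image_rotOrbit (k : ℕ) :
    #(aperiodicCodes_finite (n := n) k).toFinset =
      n * #((aperiodicCodes_finite (n := n) k).toFinset.image (rotOrbit n)) := by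
  refine card_eq_mul_card_image_of_forall_card_fiber _ _ n fun S hS => ?_
  obtain ⟨f, hf, rfl⟩ := mem_image.1 hS
  rw [Set.Finite.mem_toFinset] at hf
  refine (Set.ncard_coe_finset _).symm.trans (Eq.trans ?_ hf.2.ncard_rotOrbit)
  congr 1
  ext g
  simp only [coe_filter, Set.Finite.mem_toFinset, rotOrbit_eq_rotOrbit_iff, Set.mem_ofPred_eq,
    and_iff_right_iff_imp]
  exact (rotOrbit_subset_aperiodicCodes hf ·)

end Codes

theorem riwi_gives_bijection_general (n k : ℕ) [NeZero n]
    (χ : (ZMod n → ℕ) → (ZMod n → ℕ)) (hχ : IsRiwi n k χ) :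
    Nonempty
      ({f : ZMod n → ℕ // IsCode n k f ∧ Aperiodic n f ∧ wsum n f = 0} ≃
        aperiodicNecklaces n k) := by
  classical
  obtain ⟨hbij, -, hw⟩ := hχ
  set s := (aperiodicCodes_finite (n := n) k).toFinset
  have hweight : #s = n * #{f ∈ s | wsum n f = 0} :=
    s.card_eq_mul_card_filter_of_injOn_add_one (wsum n) (by simpa [s] using hbij.mapsTo)
      (by simpa [s] using hbij.injOn) (fun f hf => hw f (by simpa [s] using hf))
  have hcard : #{f ∈ s | wsum n f = 0} = #(s.image (rotOrbit n)) :=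
    Nat.eq_of_mul_eq_mul_left (NeZero.pos n)
      (hweight.symm.trans (card_aperiodicCodes_eq_mul_card_image_rotOrbit k))
  refine ⟨(Equiv.subtypeEquivRight ?_).trans
    ((Finset.equivOfCardEq hcard).trans (Equiv.subtypeEquivRight ?_))⟩
  · simp [s, aperiodicCodes, and_assoc]
  · simp [s, aperiodicNecklaces, aperiodicCodes, eq_comm]

/-- If there exists a riwi-map on `F'_{n,k}`, then there is a bijection between
`F'_{n,k,0}`, the aperiodic `(n,k)`-codes with weighted sum `0`, and `N'_{n,k}`,
the rotation-classes of aperiodic `(n,k)`-codes. -/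
theorem riwi_gives_bijection (n k : ℕ) [NeZero n] (hk : 0 < k)
    (χ : (ZMod n → ℕ) → (ZMod n → ℕ)) (hχ : IsRiwi n k χ) :
    Nonempty
      ({f : ZMod n → ℕ // IsCode n k f ∧ Aperiodic n f ∧ wsum n f = 0} ≃
        aperiodicNecklaces n k) :=
  riwi_gives_bijection_general n k χ hχ
end

section
/- If n and k are coprime positive integers, then every (n,k)-code is aperiodic: for every (n,k)-code f and every integer j, c^j(f) = f implies that n divides j. -/
open Finset

lemma wsum_rot (n : ℕ) [NeZero n] (f : ZMod n → ℕ) :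
    wsum n (rot n f) = wsum n f - ∑ i : ZMod n, (f i : ZMod n) := by
  have h : wsum n (rot n f) = ∑ i : ZMod n, (i - 1) * (f i : ZMod n) := by
    unfold wsum rot
    exact Fintype.sum_equiv (Equiv.addRight (1 : ZMod n)) _ _ (by simp)
  rw [h]
  simp [sub_mul, Finset.sum_sub_distrib, wsum]

lemma wsum_rot_iter (n k : ℕ) [NeZero n] (f : ZMod n → ℕ) (hcode : IsCode n k f) :
    ∀ j : ℕ, wsum n ((rot n)^[j] f) = wsum n f - j * k := by
  intro j
  induction j with
  | zero => simp
  | succ j ih =>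
    have hsum : ∑ i : ZMod n, (((rot n)^[j] f) i : ZMod n) = (k : ZMod n) := by
      have : ∑ i : ZMod n, ((rot n)^[j] f) i = k := by
        clear ih
        induction j with
        | zero => exact hcode
        | succ m ihm =>
          rw [Function.iterate_succ_apply']
          rw [← ihm]
          unfold rot
          exact Fintype.sum_equiv (Equiv.addRight (1 : ZMod n)) _ _ (by simp)
      rw [← Nat.cast_sum, this]
    rw [Function.iterate_succ_apply', wsum_rot, ih, hsum]
    push_cast
    ring

/-- If `n` and `k` are coprime, then every `(n,k)`-code is aperiodic:
`c^j f = f` implies `n ∣ j`. -/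
theorem coprime_all_aperiodic (n k : ℕ) [NeZero n] (hk : 0 < k)
    (hco : Nat.Coprime n k) (f : ZMod n → ℕ) (hcode : IsCode n k f) :
    ∀ j : ℕ, (rot n)^[j] f = f → n ∣ j := by
  intro j hj
  have h := wsum_rot_iter n k f hcode j
  rw [hj] at h
  have : ((j * k : ℕ) : ZMod n) = 0 := by
    push_cast
    linear_combination h
  have hdvd : n ∣ j * k := (ZMod.natCast_eq_zero_iff _ _).mp this
  exact (Nat.Coprime.dvd_of_dvd_mul_right hco) hdvd
end

section
/- If n is a prime number and k is a positive integer, then there exists a bijection between N_{n,k} (the set of rotation-classes of (n,k)-codes, i.e., binary necklaces with n black beads and k white beads) and F_{n,k,0} (the set of (n,k)-codes with weighted sum 0 in ZMod n). -/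
open Finset

/-- The set `N_{n,k}` of binary necklaces with `n` black and `k` white beads,
realized as rotation-classes of `(n,k)`-codes. -/
def necklaces (n k : ℕ) [NeZero n] : Set (Set (ZMod n → ℕ)) :=
  {S | ∃ f : ZMod n → ℕ, IsCode n k f ∧ S = rotOrbit n f}

/-!
Both sets have `(#codes + (n - 1) * [n ∣ k]) / n` elements. For the necklaces this is Burnside's
lemma for the rotation action of `ZMod n` on codes: as `n` is prime, a nonzero rotation fixes only
the constant codes, and a constant code exists exactly when `n ∣ k`. For the codes of weight `0`
it is the filter `n * [W f = 0] = ∑ᵤ ψ (u * W f)` with a primitive additive character `ψ`: for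
`u ≠ 0` the sum of `ψ (u * W f)` over all codes is the coefficient of `X ^ k` in
`∏ₐ 1 / (1 - ψ (u * a) X) = 1 / (1 - X ^ n)`, that is `[n ∣ k]`.
-/

namespace PowerSeries

variable {R : Type*} [CommRing R]

theorem coeff_prod_rescale_mk_one {ι : Type*} [Fintype ι] [DecidableEq ι] (a : ι → R) (k : ℕ) :
    coeff k (∏ i, rescale (a i) (mk 1)) = ∑ f ∈ piAntidiag univ k, ∏ i, a i ^ f i := by
  rw [coeff_prod]
  refine sum_nbij' (fun l => ⇑l) Finsupp.equivFunOnFinite.symm ?_ ?_ ?_ ?_ ?_ <;>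
    simp [coeff_rescale, mem_finsuppAntidiag]

theorem prod_one_sub_C_mul_X_mul_prod_rescale_mk_one {ι : Type*} [Fintype ι] (a : ι → R) :
    (∏ i, (1 - C (a i) * X)) * ∏ i, rescale (a i) (mk 1) = 1 := by
  rw [← prod_mul_distrib]
  refine prod_eq_one fun i _ => ?_
  rw [mul_comm, ← rescale_X, ← map_one (rescale (a i)), ← map_sub, ← map_mul,
    mk_one_mul_one_sub_eq_one, map_one]

theorem coeff_eq_ite_dvd_of_one_sub_X_pow_mul_eq_one {n : ℕ} (hn : 0 < n) {G : R⟦X⟧}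
    (hG : (1 - X ^ n) * G = 1) (k : ℕ) : coeff k G = if n ∣ k then 1 else 0 := by
  have hG' : G = 1 + X ^ n * G := by linear_combination hG
  induction k using Nat.strong_induction_on with
  | _ k ih =>
    rw [hG', map_add, coeff_X_pow_mul', coeff_one]
    by_cases hk : n ≤ k
    · rw [if_pos hk, ih (k - n) (by omega), if_neg (by omega), zero_add]
      simp only [Nat.dvd_sub_iff_left hk dvd_rfl]
    · have hdvd : n ∣ k ↔ k = 0 :=
        ⟨fun h => Nat.eq_zero_of_dvd_of_lt h (by omega), fun h => h ▸ dvd_zero n⟩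
      rw [if_neg hk, add_zero]
      simp only [hdvd]

theorem sum_piAntidiag_prod_pow_eq_ite_dvd {ι : Type*} [Fintype ι] [DecidableEq ι] {n : ℕ}
    (hn : 0 < n) (a : ι → R) (ha : ∏ i, (1 - C (a i) * X) = (1 - X ^ n : R⟦X⟧)) (k : ℕ) :
    ∑ f ∈ piAntidiag univ k, ∏ i, a i ^ f i = if n ∣ k then 1 else 0 := by
  rw [← coeff_prod_rescale_mk_one]
  exact coeff_eq_ite_dvd_of_one_sub_X_pow_mul_eq_one hn
    (ha ▸ prod_one_sub_C_mul_X_mul_prod_rescale_mk_one a) k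

end PowerSeries

theorem AddChar.map_sum_eq_prod {A M ι : Type*} [AddCommMonoid A] [CommMonoid M]
    (ψ : AddChar A M) (s : Finset ι) (g : ι → A) : ψ (∑ i ∈ s, g i) = ∏ i ∈ s, ψ (g i) :=
  map_prod ψ.toMonoidHom (fun i => Multiplicative.ofAdd (g i)) s

namespace AddChar.IsPrimitive

open Polynomial

variable {n : ℕ} [NeZero n]

section CommMonoid

variable {M : Type*} [CommMonoid M] {φ : AddChar (ZMod n) M}

theorem injective (hφ : φ.IsPrimitive) : Function.Injective φ := by
  intro a b h
  have hab : φ (a - b) * φ b = 1 * φ b := by rw [← map_add_eq_mul, sub_add_cancel, h, one_mul]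
  rw [← sub_eq_zero, ← hφ.zmod_char_eq_one_iff n]
  exact (φ.val_isUnit b).mul_left_injective hab

theorem isPrimitiveRoot_apply_one (hφ : φ.IsPrimitive) : IsPrimitiveRoot (φ 1) n := by
  refine (IsPrimitiveRoot.iff_def _ _).mpr ⟨?_, fun l hl => ?_⟩
  · rw [← map_nsmul_eq_pow, nsmul_eq_mul, mul_one, ZMod.natCast_self, map_zero_eq_one]
  · rwa [← map_nsmul_eq_pow, nsmul_eq_mul, mul_one, hφ.zmod_char_eq_one_iff n,
      ZMod.natCast_eq_zero_iff] at hl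

end CommMonoid

variable {K : Type*} [CommRing K] [IsDomain K] {φ : AddChar (ZMod n) K}

theorem prod_X_sub_C (hφ : φ.IsPrimitive) : ∏ a, (X - C (φ a)) = X ^ n - 1 := by
  classical
  have himage : univ.image φ = nthRootsFinset n (1 : K) := by
    refine eq_of_subset_of_card_le (fun x hx => ?_) ?_
    · obtain ⟨a, -, rfl⟩ := mem_image.mp hx
      rw [mem_nthRootsFinset (NeZero.pos n), ← map_nsmul_eq_pow, nsmul_eq_mul, ZMod.natCast_self,
        zero_mul, map_zero_eq_one]
    · rw [hφ.isPrimitiveRoot_apply_one.card_nthRootsFinset,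
        card_image_of_injective _ hφ.injective, card_univ, ZMod.card]
  rw [X_pow_sub_one_eq_prod (NeZero.pos n) hφ.isPrimitiveRoot_apply_one, ← himage,
    prod_image fun a _ b _ h => hφ.injective h]

theorem prod_neg (hφ : φ.IsPrimitive) : ∏ a, -φ a = -1 := by
  simpa [eval_prod, zero_pow (NeZero.ne n)] using congrArg (eval 0) hφ.prod_X_sub_C

theorem prod_one_sub_C_mul_X (hφ : φ.IsPrimitive) : ∏ a, (1 - C (φ a) * X) = 1 - X ^ n := by
  have hfactor : ∀ a, 1 - C (φ a) * X = C (-φ a) * (X - C (φ (-a))) := fun a => by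
    rw [C_neg, neg_mul, mul_sub, ← C_mul, ← map_add_eq_mul, add_neg_cancel, map_zero_eq_one, C_1]
    ring
  rw [prod_congr rfl fun a _ => hfactor a, prod_mul_distrib, ← map_prod, hφ.prod_neg,
    Fintype.prod_equiv (Equiv.neg _) (fun a => X - C (φ (-a))) (fun a => X - C (φ a))
      fun _ => rfl,
    hφ.prod_X_sub_C, C_neg, C_1]
  ring

end AddChar.IsPrimitive

section Codes

variable {n : ℕ} [NeZero n] {k : ℕ}

def codes (n k : ℕ) [NeZero n] : Finset (ZMod n → ℕ) := piAntidiag univ k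

@[simp] theorem mem_codes {f : ZMod n → ℕ} : f ∈ codes n k ↔ IsCode n k f := by
  simp [codes, IsCode]

abbrev Code (n k : ℕ) [NeZero n] := {f : ZMod n → ℕ // IsCode n k f}

instance : Fintype (Code n k) := Fintype.subtype (codes n k) fun _ => mem_codes

theorem isCode_comp_add_right (j : ZMod n) {f : ZMod n → ℕ} (hf : IsCode n k f) :
    IsCode n k fun i => f (i + j) :=
  (Fintype.sum_equiv (Equiv.addRight j) _ _ fun _ => rfl).trans hf

instance : AddAction (ZMod n) (Code n k) where
  vadd j f := ⟨fun i => f.1 (i + j), isCode_comp_add_right j f.2⟩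
  zero_vadd f := by ext; simp only [HVAdd.hVAdd, add_zero]
  add_vadd a b f := by ext; simp only [HVAdd.hVAdd, add_comm a, add_assoc]

theorem Code.vadd_apply (j : ZMod n) (f : Code n k) (i : ZMod n) :
    (j +ᵥ f).1 i = f.1 (i + j) :=
  rfl

theorem rot_iterate_apply (m : ℕ) (f : ZMod n → ℕ) (i : ZMod n) :
    (rot n)^[m] f i = f (i + m) := by
  induction m generalizing i with
  | zero => simp
  | succ m ih => rw [Function.iterate_succ_apply', rot, ih]; push_cast; ring_nf

theorem rotOrbit_eq_image_orbit (f : Code n k) :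
    rotOrbit n f.1 = Subtype.val '' AddAction.orbit (ZMod n) f := by
  ext g
  simp only [rotOrbit, Set.mem_ofPred_eq, Set.mem_image, AddAction.mem_orbit_iff]
  constructor
  · rintro ⟨m, rfl⟩
    exact ⟨(m : ZMod n) +ᵥ f, ⟨_, rfl⟩, funext fun i => (rot_iterate_apply m f.1 i).symm⟩
  · rintro ⟨_, ⟨j, rfl⟩, rfl⟩
    exact ⟨j.val, funext fun i => by rw [rot_iterate_apply, ZMod.natCast_zmod_val]; rfl⟩

noncomputable def necklacesEquivOrbits :
    necklaces n k ≃ Quotient (AddAction.orbitRel (ZMod n) (Code n k)) :=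
  let r : Code n k → Set (ZMod n → ℕ) := fun f => rotOrbit n f.1
  have hker : ∀ f g, Setoid.ker r f g ↔ AddAction.orbitRel (ZMod n) (Code n k) f g :=
    fun f g => by
      rw [Setoid.ker_def, AddAction.orbitRel_apply, ← AddAction.orbit_eq_iff]
      simp only [r, rotOrbit_eq_image_orbit]
      exact (Set.image_injective.mpr Subtype.val_injective).eq_iff
  have hrange : Set.range r = necklaces n k := by
    ext S
    exact ⟨fun ⟨f, hf⟩ => ⟨f.1, f.2, hf.symm⟩, fun ⟨f, hf, hS⟩ => ⟨⟨f, hf⟩, hS.symm⟩⟩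
  ((Equiv.setCongr hrange).symm.trans (Setoid.quotientKerEquivRange r).symm).trans
    (Quotient.congrRight hker)

instance : Finite (necklaces n k) := .of_equiv _ necklacesEquivOrbits.symm

theorem fixedBy_code_eq_const (hn : n.Prime) {j : ZMod n} (hj : j ≠ 0) :
    AddAction.fixedBy (Code n k) j = {f | ∀ i, f.1 i = f.1 0} := by
  ext f
  rw [AddAction.mem_fixedBy, Set.mem_ofPred_eq]
  constructor
  · intro h i
    have : Fact (Nat.card (ZMod n)).Prime := ⟨by rwa [Nat.card_zmod]⟩
    have htop : AddAction.stabilizer (ZMod n) f = ⊤ :=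
      (AddAction.stabilizer (ZMod n) f).eq_bot_or_eq_top_of_prime_card.resolve_left fun hbot =>
        hj <| AddSubgroup.mem_bot.mp (hbot ▸ AddAction.mem_stabilizer_iff.mpr h)
    have hi : i +ᵥ f = f := AddAction.mem_stabilizer_iff.mp (htop ▸ AddSubgroup.mem_top i)
    simpa [Code.vadd_apply] using congrArg (fun g : Code n k => g.1 0) hi
  · intro h
    ext i
    rw [Code.vadd_apply, h, h i]

theorem isCode_const_iff {c : ℕ} : IsCode n k (fun _ => c) ↔ n * c = k := by
  simp [IsCode, ZMod.card]

theorem Code.mul_apply_zero_of_const (f : Code n k) (hf : ∀ i, f.1 i = f.1 0) :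
    n * f.1 0 = k :=
  isCode_const_iff.mp (funext hf ▸ f.2)

theorem card_const_code :
    Nat.card {f : Code n k | ∀ i, f.1 i = f.1 0} = if n ∣ k then 1 else 0 := by
  split_ifs with hdvd
  · obtain ⟨c, rfl⟩ := hdvd
    refine Nat.card_eq_one_iff_unique.mpr ⟨⟨fun ⟨f, hf⟩ ⟨g, hg⟩ => ?_⟩,
      ⟨⟨⟨fun _ => c, isCode_const_iff.mpr rfl⟩, fun _ => rfl⟩⟩⟩
    have h0 : f.1 0 = g.1 0 := Nat.eq_of_mul_eq_mul_left (NeZero.pos n)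
      ((f.mul_apply_zero_of_const hf).trans (g.mul_apply_zero_of_const hg).symm)
    exact Subtype.ext <| Subtype.ext <| funext fun i => by rw [hf i, hg i, h0]
  · exact Nat.card_eq_zero.mpr <| Or.inl
      ⟨fun ⟨f, hf⟩ => hdvd ⟨f.1 0, (f.mul_apply_zero_of_const hf).symm⟩⟩

theorem card_necklaces_mul (hn : n.Prime) :
    Nat.card (necklaces n k) * n = #(codes n k) + (n - 1) * if n ∣ k then 1 else 0 := by
  classical
  have hburnside :=
    AddAction.sum_card_fixedBy_eq_card_orbits_mul_card_addGroup (ZMod n) (Code n k)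
  rw [ZMod.card, Fintype.sum_eq_add_sum_compl 0] at hburnside
  have hfixed : ∀ j ∈ ({0}ᶜ : Finset (ZMod n)),
      Fintype.card (AddAction.fixedBy (Code n k) j) = if n ∣ k then 1 else 0 := fun j hj => by
    rw [← Nat.card_eq_fintype_card,
      fixedBy_code_eq_const hn (mem_compl.mp hj ∘ mem_singleton.mpr), card_const_code]
  rw [Nat.card_congr necklacesEquivOrbits, Nat.card_eq_fintype_card, ← hburnside,
    sum_congr rfl hfixed, sum_const, card_compl, card_singleton, ZMod.card, smul_eq_mul,
    ← Nat.card_eq_fintype_card, AddAction.fixedBy_zero_eq_univ, Nat.card_univ,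
    Nat.card_eq_fintype_card, Fintype.card_of_subtype _ fun _ => mem_codes]

theorem sum_codes_addChar_wsum {K : Type*} [CommRing K] [IsDomain K] {φ : AddChar (ZMod n) K}
    (hφ : φ.IsPrimitive) (k : ℕ) :
    ∑ f ∈ codes n k, φ (wsum n f) = if n ∣ k then 1 else 0 := by
  have hprod : ∏ a, (1 - PowerSeries.C (φ a) * PowerSeries.X) =
      (1 - PowerSeries.X ^ n : PowerSeries K) := by
    simpa using congrArg Polynomial.coeToPowerSeries.ringHom hφ.prod_one_sub_C_mul_X
  rw [← PowerSeries.sum_piAntidiag_prod_pow_eq_ite_dvd (NeZero.pos n) _ hprod k]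
  refine sum_congr rfl fun f _ => ?_
  rw [wsum, AddChar.map_sum_eq_prod]
  refine prod_congr rfl fun i _ => ?_
  rw [mul_comm, ← nsmul_eq_mul, AddChar.map_nsmul_eq_pow]

theorem card_filter_wsum_eq_zero_mul (hn : n.Prime) :
    #{f ∈ codes n k | wsum n f = 0} * n = #(codes n k) + (n - 1) * if n ∣ k then 1 else 0 := by
  have : Fact n.Prime := ⟨hn⟩
  let ψ : AddChar (ZMod n) ℂ := ZMod.stdAddChar
  have hψ : ψ.IsPrimitive := ZMod.isPrimitive_stdAddChar n
  have horth : ∀ w : ZMod n, ∑ u, ψ (u * w) = if w = 0 then (n : ℂ) else 0 := fun w => by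
    rw [AddChar.sum_mulShift w hψ, ZMod.card, Nat.cast_ite, Nat.cast_zero]
  have hshift : ∀ u : ZMod n, ∑ f ∈ codes n k, ψ (u * wsum n f) =
      if u = 0 then (#(codes n k) : ℂ) else if n ∣ k then 1 else 0 := fun u => by
    rcases eq_or_ne u 0 with rfl | hu
    · simp
    · rw [if_neg hu, ← sum_codes_addChar_wsum (AddChar.IsPrimitive.of_ne_one (hψ hu)) k]
      simp only [AddChar.mulShift_apply]
  have hcount : (#{f ∈ codes n k | wsum n f = 0} : ℂ) * n =
      ∑ u, ∑ f ∈ codes n k, ψ (u * wsum n f) := by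
    rw [sum_comm, sum_congr rfl fun f _ => horth _, ← sum_filter, sum_const, nsmul_eq_mul]
  rw [sum_congr rfl fun u _ => hshift u, Fintype.sum_eq_add_sum_compl 0, if_pos rfl,
    sum_congr rfl fun u hu => if_neg (mem_compl.mp hu ∘ mem_singleton.mpr), sum_const,
    card_compl, card_singleton, ZMod.card, nsmul_eq_mul] at hcount
  exact_mod_cast hcount

end Codes

theorem prime_necklace_bijection_general (n k : ℕ) [NeZero n]
    (hprime : n.Prime) :
    Nonempty
      (necklaces n k ≃ {f : ZMod n → ℕ // IsCode n k f ∧ wsum n f = 0}) := by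
  let e : {f : ZMod n → ℕ // IsCode n k f ∧ wsum n f = 0} ≃ {f ∈ codes n k | wsum n f = 0} :=
    Equiv.subtypeEquivRight fun f => by simp
  have : Finite {f : ZMod n → ℕ // IsCode n k f ∧ wsum n f = 0} := .of_equiv _ e.symm
  refine Finite.card_eq.mp (Nat.eq_of_mul_eq_mul_right (NeZero.pos n) ?_)
  rw [Nat.card_congr e, Nat.card_eq_finsetCard, card_necklaces_mul hprime,
    card_filter_wsum_eq_zero_mul hprime]

/-- If `n` is prime, there is a bijection between `N_{n,k}` and `F_{n,k,0}`,
the `(n,k)`-codes with weighted sum `0`. -/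
theorem prime_necklace_bijection (n k : ℕ) [NeZero n] (hk : 0 < k)
    (hprime : n.Prime) :
    Nonempty
      (necklaces n k ≃ {f : ZMod n → ℕ // IsCode n k f ∧ wsum n f = 0}) :=
  prime_necklace_bijection_general n k hprime
end

section
/- Let k be an even positive integer. Identify a necklace in N_{2,k} with an unordered pair {a,b} of nonnegative integers with a + b = k and a ≥ b. Then the map which sends {a,b} to the code (f(0), f(1)) = (a, b) if b is even, and to (f(0), f(1)) = (b−1, a+1) if b is odd, is a well-defined bijection from N_{2,k} to F_{2,k,0}. -/
open Finset

/-! The map has an explicit inverse: a code `(x, y)` with `y` even is the image of `{x, y}` if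
`y ≤ x`, and of `{y - 1, x + 1}` through the odd branch otherwise. Evenness of `k` is what makes
the parities match: for `b` odd, `a + 1 = k - b + 1` is even, and for `y` even, `x = k - y` is even,
so `x + 1 ≠ y` and `{y - 1, x + 1}` is correctly ordered. -/

lemma sum_zmod_two {M : Type*} [AddCommMonoid M] (g : ZMod 2 → M) : ∑ i, g i = g 0 + g 1 :=
  Fin.sum_univ_two g

lemma isCode_two_iff {k : ℕ} {f : ZMod 2 → ℕ} : IsCode 2 k f ↔ f 0 + f 1 = k := by
  rw [IsCode, sum_zmod_two]

lemma wsum_two (f : ZMod 2 → ℕ) : wsum 2 f = f 1 := by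
  rw [wsum, sum_zmod_two, zero_mul, zero_add, one_mul]

lemma wsum_two_eq_zero_iff {f : ZMod 2 → ℕ} : wsum 2 f = 0 ↔ Even (f 1) := by
  rw [wsum_two, ZMod.natCast_eq_zero_iff_even]

lemma funext_zmod_two {α : Type*} {f g : ZMod 2 → α} (h0 : f 0 = g 0) (h1 : f 1 = g 1) :
    f = g :=
  funext (Fin.forall_fin_two.2 ⟨h0, h1⟩)

/-- Necklaces `{a, b}` of `N_{2,k}`, normalised as `(a, b)` with `a ≥ b`. -/
def necklacePairs (k : ℕ) : Set (ℕ × ℕ) := {p | p.1 + p.2 = k ∧ p.2 ≤ p.1}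

def evenCodes (k : ℕ) : Set (ZMod 2 → ℕ) := {f | IsCode 2 k f ∧ wsum 2 f = 0}

def necklaceCode (p : ℕ × ℕ) : ZMod 2 → ℕ := fun i =>
  if i = 0 then (if p.2 % 2 = 0 then p.1 else p.2 - 1)
  else (if p.2 % 2 = 0 then p.2 else p.1 + 1)

def necklaceOfCode (f : ZMod 2 → ℕ) : ℕ × ℕ :=
  if f 1 ≤ f 0 then (f 0, f 1) else (f 1 - 1, f 0 + 1)

lemma necklaceCode_zero (p : ℕ × ℕ) :
    necklaceCode p 0 = if p.2 % 2 = 0 then p.1 else p.2 - 1 := rfl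

lemma necklaceCode_one (p : ℕ × ℕ) :
    necklaceCode p 1 = if p.2 % 2 = 0 then p.2 else p.1 + 1 := rfl

variable {k : ℕ}

lemma mapsTo_necklaceCode (hk : Even k) :
    Set.MapsTo necklaceCode (necklacePairs k) (evenCodes k) := by
  rintro ⟨a, b⟩ ⟨hab, hba⟩
  rw [Nat.even_iff] at hk
  refine ⟨isCode_two_iff.2 ?_, wsum_two_eq_zero_iff.2 (Nat.even_iff.2 ?_)⟩ <;>
    simp only [necklaceCode_zero, necklaceCode_one] at hab ⊢ <;> split_ifs <;> omega

lemma mapsTo_necklaceOfCode (hk : Even k) :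
    Set.MapsTo necklaceOfCode (evenCodes k) (necklacePairs k) := by
  rintro f ⟨hcode, hw⟩
  rw [isCode_two_iff] at hcode
  rw [wsum_two_eq_zero_iff, Nat.even_iff] at hw
  rw [Nat.even_iff] at hk
  unfold necklaceOfCode
  split_ifs <;> constructor <;> dsimp only <;> omega

lemma leftInvOn_necklaceOfCode :
    Set.LeftInvOn necklaceOfCode necklaceCode (necklacePairs k) := by
  rintro ⟨a, b⟩ ⟨_, hba⟩
  unfold necklaceOfCode
  simp only [necklaceCode_zero, necklaceCode_one]
  split_ifs <;> ext <;> dsimp only <;> omega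

lemma rightInvOn_necklaceOfCode (hk : Even k) :
    Set.RightInvOn necklaceOfCode necklaceCode (evenCodes k) := by
  rintro f ⟨hcode, hw⟩
  rw [isCode_two_iff] at hcode
  rw [wsum_two_eq_zero_iff, Nat.even_iff] at hw
  rw [Nat.even_iff] at hk
  unfold necklaceOfCode
  apply funext_zmod_two <;> simp only [necklaceCode_zero, necklaceCode_one] <;> split_ifs <;>
    dsimp only at * <;> omega

theorem two_necklace_bijection_general (k : ℕ) (hkeven : Even k) :
    Set.BijOn
      (fun p : ℕ × ℕ => fun i : ZMod 2 =>
        if i = 0 then (if p.2 % 2 = 0 then p.1 else p.2 - 1)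
        else (if p.2 % 2 = 0 then p.2 else p.1 + 1))
      {p : ℕ × ℕ | p.1 + p.2 = k ∧ p.2 ≤ p.1}
      {f : ZMod 2 → ℕ | IsCode 2 k f ∧ wsum 2 f = 0} :=
  Set.InvOn.bijOn ⟨leftInvOn_necklaceOfCode, rightInvOn_necklaceOfCode hkeven⟩
    (mapsTo_necklaceCode hkeven) (mapsTo_necklaceOfCode hkeven)

/-- For `n = 2` and `k` even, identifying a necklace in `N_{2,k}` with an unordered
pair `{a,b}`, `a + b = k`, `a ≥ b`: the map sending `{a,b}` to the code `(a, b)` if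
`b` is even and to `(b-1, a+1)` if `b` is odd is a well-defined bijection from
`N_{2,k}` onto `F_{2,k,0}`. -/
theorem two_necklace_bijection (k : ℕ) (hk : 0 < k) (hkeven : Even k) :
    Set.BijOn
      (fun p : ℕ × ℕ => fun i : ZMod 2 =>
        if i = 0 then (if p.2 % 2 = 0 then p.1 else p.2 - 1)
        else (if p.2 % 2 = 0 then p.2 else p.1 + 1))
      {p : ℕ × ℕ | p.1 + p.2 = k ∧ p.2 ≤ p.1}
      {f : ZMod 2 → ℕ | IsCode 2 k f ∧ wsum 2 f = 0} :=
  two_necklace_bijection_general k hkeven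
end
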